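/- arXiv:1206.4066 — 2 statements merged into one kernel-verified Lean document; each statement's English description precedes it below -/
import Mathlib

section
/- Suppose c : A → {1,…,k} is injective. Then for every integer m ≥ k, |χ_{G,c}(−m)| equals the number of pairs (ĉ, σ) where ĉ : V → {1,…,m} is a (not necessarily proper) extension of c of size m and σ is an acyclic orientation of G weakly compatible with ĉ. -/
/-!
Deletion–contraction on an edge `xy` with `y ∉ A`. Write `N(G)` for the number of proper
extensions and `Q(G)` for the number of pairs `(ĉ, σ)`. Proper extensions of `G ∖ xy` either
separate `x` and `y` (proper extensions of `G`) or agree on them (proper extensions of `G / xy`),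
so `N(G) = N(G ∖ xy) - N(G / xy)`. Dropping the arc `x → y` identifies the pairs of `G` with
`σ x y` with the pairs of `G ∖ xy` having `ĉ x ≤ ĉ y` and no directed path `y ⇝ x`. These sets,
together with their mirror images for the arc `y → x`, cover the pairs of `G ∖ xy` and overlap
exactly in the pairs with `ĉ x = ĉ y` and no directed path between `x` and `y`, which are the
pairs of `G / xy`. Hence `Q(G) = Q(G ∖ xy) + Q(G / xy)`, and since the contraction has one
uncoloured vertex fewer, induction on the number of edges gives a polynomial `Z` with
`Z(m) = N(G)` and `Z(-m) = (-1)^{|V ∖ A|} Q(G)`. When every edge lies inside `A`, injectivity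
of `c` makes every extension proper and determines the orientation, so both counts are
`m^{|V ∖ A|}`.
-/

open Relation

theorem Set.ncard_sep_add_ncard_sep_not {α : Type*} {s : Set α} (hs : s.Finite) (P : α → Prop) :
    {a ∈ s | P a}.ncard + {a ∈ s | ¬P a}.ncard = s.ncard :=
  Set.ncard_inter_add_ncard_sdiff_eq_ncard s {a | P a} hs

namespace ChromaticReciprocity

variable {W : Type*}

section Relations

variable {r : W → W → Prop} {a b x y : W}

lemma lt_of_transGen {α : Type*} [Preorder α] {f : W → α} (hf : ∀ ⦃u v⦄, r u v → f u < f v)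
    (h : TransGen r a b) : f a < f b := by
  induction h with
  | single h => exact hf h
  | tail _ h ih => exact ih.trans (hf h)

lemma le_of_transGen {α : Type*} [Preorder α] {f : W → α} (hf : ∀ ⦃u v⦄, r u v → f u ≤ f v)
    (h : TransGen r a b) : f a ≤ f b := by
  induction h with
  | single h => exact hf h
  | tail _ h ih => exact ih.trans (hf h)

def addArc (r : W → W → Prop) (x y : W) : W → W → Prop := fun u v => r u v ∨ (u = x ∧ v = y)

def removeArc (r : W → W → Prop) (x y : W) : W → W → Prop := fun u v => r u v ∧ ¬(u = x ∧ v = y)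

lemma addArc_removeArc (h : r x y) : addArc (removeArc r x y) x y = r := by
  funext u v
  by_cases huv : u = x ∧ v = y
  · obtain ⟨rfl, rfl⟩ := huv
    simp [addArc, h]
  · simp [addArc, removeArc, huv]

lemma removeArc_addArc (h : ¬r x y) : removeArc (addArc r x y) x y = r := by
  funext u v
  by_cases huv : u = x ∧ v = y
  · obtain ⟨rfl, rfl⟩ := huv
    simp [removeArc, h]
  · simp [addArc, removeArc, huv]

lemma transGen_addArc (h : TransGen (addArc r x y) a b) :
    TransGen r a b ∨ (ReflTransGen r a x ∧ ReflTransGen r y b) := by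
  induction h using TransGen.head_induction_on with
  | single h =>
    rcases h with h | ⟨rfl, rfl⟩
    · exact .inl (.single h)
    · exact .inr ⟨.refl, .refl⟩
  | head h _ ih =>
    rcases h, ih with ⟨h | ⟨rfl, rfl⟩, h' | ⟨h₁, h₂⟩⟩
    · exact .inl (.head h h')
    · exact .inr ⟨.head h h₁, h₂⟩
    · exact .inr ⟨.refl, h'.to_reflTransGen⟩
    · exact .inr ⟨.refl, h₂⟩

lemma acyclic_addArc (hr : ∀ v, ¬TransGen r v v) (hxy : x ≠ y) (hyx : ¬TransGen r y x) (v : W) :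
    ¬TransGen (addArc r x y) v v := fun h => by
  rcases transGen_addArc h with h | ⟨h₁, h₂⟩
  · exact hr v h
  · exact hyx ((reflTransGen_iff_eq_or_transGen.1 (h₂.trans h₁)).resolve_left hxy)

end Relations

section MapAcyclic

variable {α β : Type*} {σ : α → α → Prop} {p : α → β} {J : Set α}

-- A lift of an image path is a genuine `σ`-path unless consecutive steps meet in different
-- points of a fibre; then it is cut at the last such jump, from `s` to `t`.
lemma transGen_map_lift (hp : ∀ u v, p u = p v → u = v ∨ (u ∈ J ∧ v ∈ J)) {a b : β}
    (h : TransGen (Relation.Map σ p p) a b) :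
    ∃ u v, p u = a ∧ p v = b ∧
      (TransGen σ u v ∨ ∃ s ∈ J, ∃ t ∈ J, ReflTransGen σ u s ∧ TransGen σ t v) := by
  induction h with
  | single h =>
    obtain ⟨u, v, huv, rfl, rfl⟩ := h
    exact ⟨u, v, rfl, rfl, .inl (.single huv)⟩
  | tail _ h ih =>
    obtain ⟨v', w, hvw, hv', rfl⟩ := h
    obtain ⟨u, v, rfl, hv, hpath⟩ := ih
    refine ⟨u, w, rfl, rfl, ?_⟩
    rcases hp v v' (hv.trans hv'.symm) with rfl | ⟨hvJ, hv'J⟩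
    · rcases hpath with huv | ⟨s, hs, t, ht, hus, htv⟩
      exacts [.inl (huv.tail hvw), .inr ⟨s, hs, t, ht, hus, htv.tail hvw⟩]
    · rcases hpath with huv | ⟨s, hs, t, ht, hus, -⟩
      exacts [.inr ⟨v, hvJ, v', hv'J, huv.to_reflTransGen, .single hvw⟩,
        .inr ⟨s, hs, v', hv'J, hus, .single hvw⟩]

lemma acyclic_map (hp : ∀ u v, p u = p v → u = v ∨ (u ∈ J ∧ v ∈ J))
    (hσ : ∀ v, ¬TransGen σ v v) (hJ : ∀ s ∈ J, ∀ t ∈ J, ¬TransGen σ s t) (b : β) :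
    ¬TransGen (Relation.Map σ p p) b b := fun h => by
  obtain ⟨u, v, hu, hv, hpath⟩ := transGen_map_lift hp h
  rcases hp u v (hu.trans hv.symm), hpath with
    ⟨rfl | ⟨huJ, hvJ⟩, huv | ⟨s, hs, t, ht, hus, htv⟩⟩
  · exact hσ u huv
  · exact hJ t ht s hs (htv.trans_left hus)
  · exact hJ u huJ v hvJ huv
  · exact hJ t ht v hvJ htv

end MapAcyclic

structure IsAcyclicOrientation (G : SimpleGraph W) (σ : W → W → Prop) : Prop where
  adj : ∀ ⦃u v⦄, σ u v → G.Adj u v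
  iff_not : ∀ ⦃u v⦄, G.Adj u v → (σ u v ↔ ¬σ v u)
  acyclic : ∀ v, ¬TransGen σ v v

def IsWeaklyCompatible (G : SimpleGraph W) (f : W → ℕ) (σ : W → W → Prop) : Prop :=
  ∀ ⦃u v⦄, G.Adj u v → f u < f v → σ u v

def extensions (B : Set W) (c : W → ℕ) (m : ℕ) : Set (W → ℕ) :=
  {f | (∀ v, 1 ≤ f v ∧ f v ≤ m) ∧ ∀ a ∈ B, f a = c a}

def properExtensions (G : SimpleGraph W) (B : Set W) (c : W → ℕ) (m : ℕ) : Set (W → ℕ) :=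
  {f ∈ extensions B c m | ∀ ⦃u v⦄, G.Adj u v → f u ≠ f v}

def compatiblePairs (G : SimpleGraph W) (B : Set W) (c : W → ℕ) (m : ℕ) :
    Set ((W → ℕ) × (W → W → Prop)) :=
  {p | p.1 ∈ extensions B c m ∧ IsAcyclicOrientation G p.2 ∧ IsWeaklyCompatible G p.1 p.2}

section Card

variable (G : SimpleGraph W) (B : Set W) (c : W → ℕ) (m : ℕ)

lemma natCard_properExtensions :
    Nat.card {f : W → ℕ | (∀ v, 1 ≤ f v ∧ f v ≤ m) ∧ (∀ a ∈ B, f a = c a) ∧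
      ∀ u v : W, G.Adj u v → f u ≠ f v} = (properExtensions G B c m).ncard := by
  rw [← Nat.card_coe_set_eq]
  congr 2
  ext f
  exact and_assoc.symm

lemma natCard_compatiblePairs :
    Nat.card {p : (W → ℕ) × (W → W → Prop) |
      (∀ v, 1 ≤ p.1 v ∧ p.1 v ≤ m) ∧ (∀ a ∈ B, p.1 a = c a) ∧
      (∀ u v : W, p.2 u v → G.Adj u v) ∧
      (∀ u v : W, G.Adj u v → (p.2 u v ↔ ¬ p.2 v u)) ∧
      (∀ v : W, ¬ TransGen p.2 v v) ∧
      (∀ u v : W, G.Adj u v → p.1 u < p.1 v → p.2 u v)} = (compatiblePairs G B c m).ncard := by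
  rw [← Nat.card_coe_set_eq]
  congr 2
  ext p
  exact ⟨fun ⟨h₁, h₂, h₃, h₄, h₅, h₆⟩ => ⟨⟨h₁, h₂⟩, ⟨h₃, h₄, h₅⟩, h₆⟩,
    fun ⟨⟨h₁, h₂⟩, ⟨h₃, h₄, h₅⟩, h₆⟩ => ⟨h₁, h₂, h₃, h₄, h₅, h₆⟩⟩

end Card

namespace IsAcyclicOrientation

variable {G : SimpleGraph W} {σ : W → W → Prop} {f : W → ℕ} {u v : W}

lemma not_rel_symm (hσ : IsAcyclicOrientation G σ) (h : σ u v) : ¬σ v u :=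
  (hσ.iff_not (hσ.adj h)).1 h

lemma rel_or_rel (hσ : IsAcyclicOrientation G σ) (h : G.Adj u v) : σ u v ∨ σ v u := by
  rw [hσ.iff_not h]
  exact em' _

lemma le_of_rel (hσ : IsAcyclicOrientation G σ) (hf : IsWeaklyCompatible G f σ) (h : σ u v) :
    f u ≤ f v :=
  not_lt.1 fun hlt => hσ.not_rel_symm h (hf (hσ.adj h).symm hlt)

lemma le_of_transGen (hσ : IsAcyclicOrientation G σ) (hf : IsWeaklyCompatible G f σ)
    (h : TransGen σ u v) : f u ≤ f v :=
  ChromaticReciprocity.le_of_transGen (fun _ _ => hσ.le_of_rel hf) h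

end IsAcyclicOrientation

lemma isAcyclicOrientation_adj_lt {G : SimpleGraph W} {f : W → ℕ}
    (hf : ∀ ⦃u v⦄, G.Adj u v → f u ≠ f v) :
    IsAcyclicOrientation G fun u v => G.Adj u v ∧ f u < f v where
  adj _ _ h := h.1
  iff_not _ _ h := ⟨fun h₁ h₂ => lt_asymm h₁.2 h₂.2,
    fun h₂ => ⟨h, (hf h).lt_of_le (not_lt.1 fun h₁ => h₂ ⟨h.symm, h₁⟩)⟩⟩
  acyclic v h := lt_irrefl (f v) (lt_of_transGen (fun _ _ h => h.2) h)

section Finiteness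

variable [Finite W] (G : SimpleGraph W) (B : Set W) (c : W → ℕ) (m : ℕ)

lemma extensions_finite : (extensions B c m).Finite :=
  (Set.Finite.pi' fun _ => Set.finite_Icc 1 m).subset fun _ hf v => hf.1 v

lemma properExtensions_finite : (properExtensions G B c m).Finite :=
  (extensions_finite B c m).subset fun _ hf => hf.1

lemma compatiblePairs_finite : (compatiblePairs G B c m).Finite :=
  ((extensions_finite B c m).prod Set.finite_univ).subset fun _ hp => ⟨hp.1, trivial⟩

end Finiteness

section Base

variable {G : SimpleGraph W} {B : Set W} {c : W → ℕ} {m : ℕ}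

lemma ncard_extensions [Finite W] (hc : ∀ a ∈ B, 1 ≤ c a ∧ c a ≤ m) :
    (extensions B c m).ncard = m ^ Bᶜ.ncard := by
  classical
  have : Fintype W := Fintype.ofFinite W
  have hpi : extensions B c m = Set.univ.pi fun v => if v ∈ B then {c v} else Set.Icc 1 m := by
    ext f
    simp only [extensions, Set.mem_ofPred_eq, Set.mem_univ_pi]
    constructor
    · rintro ⟨hm, hB⟩ v
      split_ifs with hv
      exacts [hB v hv, hm v]
    · intro h
      have hB : ∀ a ∈ B, f a = c a := fun a ha => by simpa [ha] using h a
      refine ⟨fun v => ?_, hB⟩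
      by_cases hv : v ∈ B
      · exact hB v hv ▸ hc v hv
      · simpa [hv] using h v
  rw [hpi, ← Nat.card_coe_set_eq, Nat.card_congr (Equiv.Set.univPi _), Nat.card_pi]
  simp only [apply_ite (fun s : Set ℕ => Nat.card s), Nat.card_unique, Nat.card_coe_set_eq,
    Set.ncard_Icc_nat]
  rw [Finset.prod_ite, Finset.prod_const_one, one_mul, Finset.prod_const, Nat.add_sub_cancel,
    Set.ncard_eq_toFinset_card']
  congr 2
  ext v
  simp

lemma ne_of_adj_of_mem_extensions
    (hB : ∀ ⦃u v⦄, G.Adj u v → u ∈ B ∧ v ∈ B) (hinj : Set.InjOn c B)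
    {f : W → ℕ} (hf : f ∈ extensions B c m) {u v : W} (h : G.Adj u v) : f u ≠ f v := by
  obtain ⟨hu, hv⟩ := hB h
  rw [hf.2 u hu, hf.2 v hv]
  exact fun hc => h.ne (hinj hu hv hc)

lemma properExtensions_eq_extensions
    (hB : ∀ ⦃u v⦄, G.Adj u v → u ∈ B ∧ v ∈ B) (hinj : Set.InjOn c B) :
    properExtensions G B c m = extensions B c m :=
  Set.sep_eq_self_iff_mem_true.2 fun _ hf _ _ => ne_of_adj_of_mem_extensions hB hinj hf

lemma compatiblePairs_eq_image
    (hB : ∀ ⦃u v⦄, G.Adj u v → u ∈ B ∧ v ∈ B) (hinj : Set.InjOn c B) :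
    compatiblePairs G B c m =
      (fun f => (f, fun u v => G.Adj u v ∧ f u < f v)) '' extensions B c m := by
  ext ⟨f, σ⟩
  simp only [Set.mem_image, Prod.mk.injEq]
  constructor
  · rintro ⟨hf, hσ, hw⟩
    refine ⟨f, hf, rfl, funext₂ fun u v => propext ⟨fun h => hw h.1 h.2, fun h => ?_⟩⟩
    have hadj := hσ.adj h
    exact ⟨hadj, (hσ.le_of_rel hw h).lt_of_ne (ne_of_adj_of_mem_extensions hB hinj hf hadj)⟩
  · rintro ⟨f, hf, rfl, rfl⟩
    exact ⟨hf, isAcyclicOrientation_adj_lt fun _ _ => ne_of_adj_of_mem_extensions hB hinj hf,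
      fun _ _ h hlt => ⟨h, hlt⟩⟩

lemma ncard_compatiblePairs_eq_ncard_extensions
    (hB : ∀ ⦃u v⦄, G.Adj u v → u ∈ B ∧ v ∈ B) (hinj : Set.InjOn c B) :
    (compatiblePairs G B c m).ncard = (extensions B c m).ncard := by
  rw [compatiblePairs_eq_image hB hinj]
  exact Set.InjOn.ncard_image fun _ _ _ _ h => congrArg Prod.fst h

end Base

section Deletion

variable {G : SimpleGraph W} {B : Set W} {c : W → ℕ} {m : ℕ} {x y : W}
  {σ : W → W → Prop} {f : W → ℕ}

lemma deleteEdges_pair_adj {u v : W} : (G.deleteEdges {s(x, y)}).Adj u v ↔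
    G.Adj u v ∧ ¬(u = x ∧ v = y) ∧ ¬(u = y ∧ v = x) := by
  simp

lemma adj_eq_or_eq_or_deleteEdges_adj {u v : W} (h : G.Adj u v) :
    (u = x ∧ v = y) ∨ (u = y ∧ v = x) ∨ (G.deleteEdges {s(x, y)}).Adj u v := by
  rw [deleteEdges_pair_adj]
  tauto

lemma IsAcyclicOrientation.removeArc (hσ : IsAcyclicOrientation G σ) (h : σ x y) :
    IsAcyclicOrientation (G.deleteEdges {s(x, y)}) (removeArc σ x y) where
  adj u v := by
    rintro ⟨huv, hne⟩
    refine deleteEdges_pair_adj.2 ⟨hσ.adj huv, hne, ?_⟩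
    rintro ⟨rfl, rfl⟩
    exact hσ.not_rel_symm h huv
  iff_not u v hadj := by
    obtain ⟨hadj, hxy, hyx⟩ := deleteEdges_pair_adj.1 hadj
    have hyx : ¬(v = x ∧ u = y) := fun h => hyx ⟨h.2, h.1⟩
    simp only [ChromaticReciprocity.removeArc, hxy, hyx, not_false_eq_true, and_true]
    exact hσ.iff_not hadj
  acyclic v h := hσ.acyclic v (TransGen.mono (fun _ _ h => h.1) _ _ h)

lemma IsWeaklyCompatible.removeArc (hf : IsWeaklyCompatible G f σ) :
    IsWeaklyCompatible (G.deleteEdges {s(x, y)}) f (removeArc σ x y) := fun _ _ h hlt =>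
  ⟨hf (deleteEdges_pair_adj.1 h).1 hlt, (deleteEdges_pair_adj.1 h).2.1⟩

lemma IsAcyclicOrientation.addArc (hσ : IsAcyclicOrientation (G.deleteEdges {s(x, y)}) σ)
    (h : G.Adj x y) (hyx : ¬TransGen σ y x) : IsAcyclicOrientation G (addArc σ x y) where
  adj u v := by
    rintro (huv | ⟨rfl, rfl⟩)
    exacts [(hσ.adj huv).1, h]
  iff_not u v hadj := by
    rcases adj_eq_or_eq_or_deleteEdges_adj (x := x) (y := y) hadj with
      ⟨rfl, rfl⟩ | ⟨rfl, rfl⟩ | hadj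
    · simp only [ChromaticReciprocity.addArc, and_self, or_true, true_iff]
      rintro (hvu | ⟨rfl, -⟩)
      exacts [hyx (.single hvu), h.ne rfl]
    · simp only [ChromaticReciprocity.addArc, and_self, or_true, not_true_eq_false, iff_false]
      rintro (huv | ⟨rfl, -⟩)
      exacts [hyx (.single huv), h.ne rfl]
    · obtain ⟨-, hxy, hyx⟩ := deleteEdges_pair_adj.1 hadj
      have hyx : ¬(v = x ∧ u = y) := fun h => hyx ⟨h.2, h.1⟩
      simp only [ChromaticReciprocity.addArc, hxy, hyx, or_false]
      exact hσ.iff_not hadj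
  acyclic := acyclic_addArc hσ.acyclic h.ne hyx

lemma IsWeaklyCompatible.addArc (hf : IsWeaklyCompatible (G.deleteEdges {s(x, y)}) f σ)
    (hle : f x ≤ f y) : IsWeaklyCompatible G f (addArc σ x y) := fun u v h hlt => by
  by_cases hxy : u = x ∧ v = y
  · exact .inr hxy
  refine .inl (hf (deleteEdges_pair_adj.2 ⟨h, hxy, ?_⟩) hlt)
  rintro ⟨rfl, rfl⟩
  exact hlt.not_ge hle

variable (B c m)

lemma ncard_properExtensions_deleteEdges [Finite W] (h : G.Adj x y) :
    (properExtensions (G.deleteEdges {s(x, y)}) B c m).ncard =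
      {f ∈ properExtensions (G.deleteEdges {s(x, y)}) B c m | f x = f y}.ncard +
        (properExtensions G B c m).ncard := by
  rw [← Set.ncard_sep_add_ncard_sep_not (properExtensions_finite _ B c m) (fun f => f x = f y)]
  congr 2
  ext f
  simp only [properExtensions, Set.mem_ofPred_eq]
  constructor
  · rintro ⟨⟨hf, hp⟩, hne⟩
    refine ⟨hf, fun u v huv => ?_⟩
    rcases adj_eq_or_eq_or_deleteEdges_adj (x := x) (y := y) huv with
      ⟨rfl, rfl⟩ | ⟨rfl, rfl⟩ | huv
    exacts [hne, Ne.symm hne, hp huv]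
  · rintro ⟨hf, hp⟩
    exact ⟨⟨hf, fun u v huv => hp huv.1⟩, hp h⟩

lemma ncard_edgeSet_deleteEdges_lt [Finite W] (h : G.Adj x y) :
    (G.deleteEdges {s(x, y)}).edgeSet.ncard < G.edgeSet.ncard := by
  rw [SimpleGraph.edgeSet_deleteEdges]
  exact Set.ncard_sdiff_singleton_lt_of_mem h (Set.toFinite _)

lemma bijOn_removeArc (h : G.Adj x y) :
    Set.BijOn (fun p => (p.1, removeArc p.2 x y)) {p ∈ compatiblePairs G B c m | p.2 x y}
      {q ∈ compatiblePairs (G.deleteEdges {s(x, y)}) B c m |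
        q.1 x ≤ q.1 y ∧ ¬TransGen q.2 y x} := by
  refine Set.InvOn.bijOn (f' := fun q => (q.1, addArc q.2 x y)) ⟨?_, ?_⟩ ?_ ?_
  · rintro ⟨f, σ⟩ ⟨-, hxy⟩
    simp only [addArc_removeArc hxy]
  · rintro ⟨f, σ⟩ ⟨⟨-, hσ, -⟩, -⟩
    have : ¬σ x y := fun hxy => (deleteEdges_pair_adj.1 (hσ.adj hxy)).2.1 ⟨rfl, rfl⟩
    simp only [removeArc_addArc this]
  · rintro ⟨f, σ⟩ ⟨⟨hf, hσ, hw⟩, hxy⟩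
    refine ⟨⟨hf, hσ.removeArc hxy, hw.removeArc⟩, hσ.le_of_rel hw hxy, fun hyx => ?_⟩
    exact hσ.acyclic y ((TransGen.mono (fun _ _ h => h.1) _ _ hyx).tail hxy)
  · rintro ⟨f, σ⟩ ⟨⟨hf, hσ, hw⟩, hle, hyx⟩
    exact ⟨⟨hf, hσ.addArc h hyx, hw.addArc hle⟩, .inr ⟨rfl, rfl⟩⟩

lemma ncard_compatiblePairs_deleteEdges [Finite W] (h : G.Adj x y) :
    (compatiblePairs G B c m).ncard = (compatiblePairs (G.deleteEdges {s(x, y)}) B c m).ncard +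
      {q ∈ compatiblePairs (G.deleteEdges {s(x, y)}) B c m |
        q.1 x = q.1 y ∧ ¬TransGen q.2 x y ∧ ¬TransGen q.2 y x}.ncard := by
  have hfin := compatiblePairs_finite (G.deleteEdges {s(x, y)}) B c m
  have hyx := (bijOn_removeArc B c m h.symm).ncard_eq
  rw [Sym2.eq_swap] at hyx
  have hsplit :
      {p ∈ compatiblePairs G B c m | ¬p.2 x y} = {p ∈ compatiblePairs G B c m | p.2 y x} :=
    Set.sep_ext_iff.2 fun p hp => (hp.2.1.iff_not h.symm).symm
  rw [← Set.ncard_sep_add_ncard_sep_not (compatiblePairs_finite G B c m) (fun p => p.2 x y),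
    hsplit, (bijOn_removeArc B c m h).ncard_eq, hyx,
    ← Set.ncard_union_add_ncard_inter _ _ (hfin.subset fun _ hq => hq.1)
      (hfin.subset fun _ hq => hq.1)]
  congr 2
  · ext ⟨f, σ⟩
    refine ⟨fun hq => hq.elim (·.1) (·.1), fun hq => ?_⟩
    obtain ⟨-, hσ, hw⟩ := id hq
    by_cases hyx : TransGen σ y x
    · exact .inr ⟨hq, hσ.le_of_transGen hw hyx, fun hxy => hσ.acyclic x (hxy.trans hyx)⟩
    rcases le_or_gt (f x) (f y) with hle | hlt
    · exact .inl ⟨hq, hle, hyx⟩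
    · exact .inr ⟨hq, hlt.le, fun hxy => (hσ.le_of_transGen hw hxy).not_gt hlt⟩
  · ext ⟨f, σ⟩
    simp only [Set.mem_inter_iff, Set.mem_ofPred_eq]
    constructor
    · rintro ⟨⟨hq, hxy, hyx⟩, -, hyx', hxy'⟩
      exact ⟨hq, hxy.antisymm hyx', hxy', hyx⟩
    · rintro ⟨hq, heq, hxy, hyx⟩
      exact ⟨⟨hq, heq.le, hyx⟩, hq, heq.ge, hxy⟩

end Deletion

section Contraction

variable {G : SimpleGraph W} {x y : W} (hxy : x ≠ y)

open Classical in
noncomputable def merge : W → {v // v ≠ y} := fun v => if h : v = y then ⟨x, hxy⟩ else ⟨v, h⟩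

lemma merge_self : merge hxy y = ⟨x, hxy⟩ := dif_pos rfl

lemma merge_of_ne {v : W} (h : v ≠ y) : merge hxy v = ⟨v, h⟩ := dif_neg h

lemma merge_val (a : {v // v ≠ y}) : merge hxy a = a := merge_of_ne hxy a.2

lemma merge_left : merge hxy x = merge hxy y := (merge_of_ne hxy hxy).trans (merge_self hxy).symm

lemma apply_merge {f : W → ℕ} (hf : f x = f y) (v : W) : f (merge hxy v) = f v := by
  by_cases hv : v = y
  · rw [hv, merge_self, hf]
  · rw [merge_of_ne hxy hv]

lemma merge_eq_merge {u v : W} (h : merge hxy u = merge hxy v) :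
    u = v ∨ (u ∈ ({x, y} : Set W) ∧ v ∈ ({x, y} : Set W)) := by
  by_cases hu : u = y <;> by_cases hv : v = y
  · exact .inl (hu.trans hv.symm)
  · rw [hu, merge_self, merge_of_ne hxy hv, Subtype.mk.injEq] at h
    exact .inr ⟨.inr hu, .inl h.symm⟩
  · rw [merge_of_ne hxy hu, hv, merge_self, Subtype.mk.injEq] at h
    exact .inr ⟨.inl h, .inr hv⟩
  · rw [merge_of_ne hxy hu, merge_of_ne hxy hv, Subtype.mk.injEq] at h
    exact .inl h

-- The edge `xy` becomes a loop at `x`, which `fromRel` discards.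
def contractEdge (G : SimpleGraph W) : SimpleGraph {v // v ≠ y} :=
  .fromRel (Relation.Map G.Adj (merge hxy) (merge hxy))

lemma contractEdge_adj_merge {u v : W} (h : (G.deleteEdges {s(x, y)}).Adj u v) :
    (contractEdge hxy G).Adj (merge hxy u) (merge hxy v) := by
  refine (SimpleGraph.fromRel_adj _ _ _).2 ⟨fun huv => ?_, .inl ⟨u, v, h.1, rfl, rfl⟩⟩
  obtain ⟨hadj, hne₁, hne₂⟩ := deleteEdges_pair_adj.1 h
  rcases merge_eq_merge hxy huv with rfl | ⟨hu | hu, hv | hv⟩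
  · exact hadj.ne rfl
  all_goals subst hu hv
  exacts [hadj.ne rfl, hne₁ ⟨rfl, rfl⟩, hne₂ ⟨rfl, rfl⟩, hadj.ne rfl]

lemma exists_of_contractEdge_adj {a b : {v // v ≠ y}} (h : (contractEdge hxy G).Adj a b) :
    ∃ u v, (G.deleteEdges {s(x, y)}).Adj u v ∧ merge hxy u = a ∧ merge hxy v = b := by
  have key {u v : W} (huv : G.Adj u v) (hne : merge hxy u ≠ merge hxy v) :
      (G.deleteEdges {s(x, y)}).Adj u v := by
    refine deleteEdges_pair_adj.2 ⟨huv, ?_, ?_⟩ <;> rintro ⟨rfl, rfl⟩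
    exacts [hne (merge_left hxy), hne (merge_left hxy).symm]
  obtain ⟨hab, ⟨u, v, huv, rfl, rfl⟩ | ⟨v, u, hvu, rfl, rfl⟩⟩ :=
    (SimpleGraph.fromRel_adj _ _ _).1 h
  exacts [⟨u, v, key huv hab, rfl, rfl⟩, ⟨u, v, key hvu.symm hab, rfl, rfl⟩]

def pullbackOrientation (G : SimpleGraph W) (τ : {v // v ≠ y} → {v // v ≠ y} → Prop) :
    W → W → Prop :=
  fun u v => (G.deleteEdges {s(x, y)}).Adj u v ∧ τ (merge hxy u) (merge hxy v)

variable {σ : W → W → Prop} {τ : {v // v ≠ y} → {v // v ≠ y} → Prop} {f : W → ℕ}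
  {g : {v // v ≠ y} → ℕ}

lemma IsAcyclicOrientation.map_merge (hσ : IsAcyclicOrientation (G.deleteEdges {s(x, y)}) σ)
    (hxy' : ¬TransGen σ x y) (hyx : ¬TransGen σ y x) :
    IsAcyclicOrientation (contractEdge hxy G) (Relation.Map σ (merge hxy) (merge hxy)) := by
  have acyclic := acyclic_map (fun _ _ => merge_eq_merge hxy) hσ.acyclic <| by
    rintro s (rfl | rfl) t (rfl | rfl)
    exacts [hσ.acyclic _, hxy', hyx, hσ.acyclic _]
  refine ⟨?_, fun a b hab => ⟨fun h h' => acyclic a (.head h (.single h')), fun h => ?_⟩, acyclic⟩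
  · rintro _ _ ⟨u, v, huv, rfl, rfl⟩
    exact contractEdge_adj_merge hxy (hσ.adj huv)
  · obtain ⟨u, v, huv, rfl, rfl⟩ := exists_of_contractEdge_adj hxy hab
    rcases hσ.rel_or_rel huv with h' | h'
    exacts [⟨u, v, h', rfl, rfl⟩, absurd ⟨v, u, h', rfl, rfl⟩ h]

lemma IsWeaklyCompatible.map_merge (hf : f x = f y)
    (hw : IsWeaklyCompatible (G.deleteEdges {s(x, y)}) f σ) :
    IsWeaklyCompatible (contractEdge hxy G) (f ∘ Subtype.val)
      (Relation.Map σ (merge hxy) (merge hxy)) := fun a b hab hlt => by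
  obtain ⟨u, v, huv, rfl, rfl⟩ := exists_of_contractEdge_adj hxy hab
  simp only [Function.comp_apply, apply_merge hxy hf] at hlt
  exact ⟨u, v, hw huv hlt, rfl, rfl⟩

lemma transGen_pullbackOrientation {u v : W} (h : TransGen (pullbackOrientation hxy G τ) u v) :
    TransGen τ (merge hxy u) (merge hxy v) :=
  TransGen.lift (merge hxy) (fun _ _ h => h.2) _ _ h

lemma IsAcyclicOrientation.pullback (hτ : IsAcyclicOrientation (contractEdge hxy G) τ) :
    IsAcyclicOrientation (G.deleteEdges {s(x, y)}) (pullbackOrientation hxy G τ) where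
  adj _ _ h := h.1
  iff_not _ _ h := ⟨fun h₁ h₂ => hτ.not_rel_symm h₁.2 h₂.2,
    fun hn => ⟨h, (hτ.iff_not (contractEdge_adj_merge hxy h)).2 fun h' => hn ⟨h.symm, h'⟩⟩⟩
  acyclic _ h := hτ.acyclic _ (transGen_pullbackOrientation hxy h)

lemma IsAcyclicOrientation.not_transGen_pullback
    (hτ : IsAcyclicOrientation (contractEdge hxy G) τ) :
    ¬TransGen (pullbackOrientation hxy G τ) x y ∧
      ¬TransGen (pullbackOrientation hxy G τ) y x := by
  refine ⟨fun h => ?_, fun h => ?_⟩ <;>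
    exact hτ.acyclic _ (merge_left hxy ▸ transGen_pullbackOrientation hxy h)

lemma IsWeaklyCompatible.pullback (hw : IsWeaklyCompatible (contractEdge hxy G) g τ) :
    IsWeaklyCompatible (G.deleteEdges {s(x, y)}) (g ∘ merge hxy) (pullbackOrientation hxy G τ) :=
  fun _ _ h hlt => ⟨h, hw (contractEdge_adj_merge hxy h) hlt⟩

lemma pullbackOrientation_map_merge (hσ : IsAcyclicOrientation (G.deleteEdges {s(x, y)}) σ)
    (hxy' : ¬TransGen σ x y) (hyx : ¬TransGen σ y x) :
    pullbackOrientation hxy G (Relation.Map σ (merge hxy) (merge hxy)) = σ := by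
  funext u v
  refine propext ⟨fun ⟨huv, hmap⟩ => ?_, fun h => ⟨hσ.adj h, u, v, h, rfl, rfl⟩⟩
  refine (hσ.rel_or_rel huv).resolve_right fun hvu => ?_
  exact (hσ.map_merge hxy hxy' hyx).not_rel_symm hmap ⟨v, u, hvu, rfl, rfl⟩

lemma map_merge_pullbackOrientation (hτ : IsAcyclicOrientation (contractEdge hxy G) τ) :
    Relation.Map (pullbackOrientation hxy G τ) (merge hxy) (merge hxy) = τ := by
  funext a b
  refine propext ⟨fun ⟨u, v, huv, hu, hv⟩ => hu ▸ hv ▸ huv.2, fun h => ?_⟩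
  obtain ⟨u, v, huv, rfl, rfl⟩ := exists_of_contractEdge_adj hxy (hτ.adj h)
  exact ⟨u, v, ⟨huv, h⟩, rfl, rfl⟩

variable (B : Set W) (c : W → ℕ) (m : ℕ)

lemma comp_val_mem_extensions (hf : f ∈ extensions B c m) :
    f ∘ Subtype.val ∈ extensions (Subtype.val ⁻¹' B : Set {v // v ≠ y}) (c ∘ Subtype.val) m :=
  ⟨fun a => hf.1 a, fun a ha => hf.2 a ha⟩

lemma comp_merge_mem_extensions (hy : y ∉ B)
    (hg : g ∈ extensions (Subtype.val ⁻¹' B : Set {v // v ≠ y}) (c ∘ Subtype.val) m) :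
    g ∘ merge hxy ∈ extensions B c m := by
  refine ⟨fun v => hg.1 _, fun a ha => ?_⟩
  have hay : a ≠ y := fun h => hy (h ▸ ha)
  simpa only [Function.comp_apply, merge_of_ne hxy hay] using hg.2 ⟨a, hay⟩ ha

lemma comp_val_comp_merge (hf : f x = f y) : (f ∘ Subtype.val) ∘ merge hxy = f :=
  funext (apply_merge hxy hf)

lemma comp_merge_comp_val : (g ∘ merge hxy) ∘ Subtype.val = g :=
  funext fun a => congrArg g (merge_val hxy a)

lemma bijOn_properExtensions_contractEdge (hy : y ∉ B) :
    Set.BijOn (· ∘ Subtype.val)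
      {f ∈ properExtensions (G.deleteEdges {s(x, y)}) B c m | f x = f y}
      (properExtensions (contractEdge hxy G) (Subtype.val ⁻¹' B) (c ∘ Subtype.val) m) := by
  refine Set.InvOn.bijOn (f' := (· ∘ merge hxy))
    ⟨fun f hf => comp_val_comp_merge hxy hf.2, fun g _ => comp_merge_comp_val hxy⟩ ?_ ?_
  · rintro f ⟨⟨hf, hp⟩, hfxy⟩
    refine ⟨comp_val_mem_extensions B c m hf, fun a b hab => ?_⟩
    obtain ⟨u, v, huv, rfl, rfl⟩ := exists_of_contractEdge_adj hxy hab
    simpa only [Function.comp_apply, apply_merge hxy hfxy] using hp huv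
  · rintro g ⟨hg, hp⟩
    exact ⟨⟨comp_merge_mem_extensions hxy B c m hy hg,
      fun u v huv => hp (contractEdge_adj_merge hxy huv)⟩, congrArg g (merge_left hxy)⟩

lemma bijOn_compatiblePairs_contractEdge (hy : y ∉ B) :
    Set.BijOn (fun q => (q.1 ∘ Subtype.val, Relation.Map q.2 (merge hxy) (merge hxy)))
      {q ∈ compatiblePairs (G.deleteEdges {s(x, y)}) B c m |
        q.1 x = q.1 y ∧ ¬TransGen q.2 x y ∧ ¬TransGen q.2 y x}
      (compatiblePairs (contractEdge hxy G) (Subtype.val ⁻¹' B) (c ∘ Subtype.val) m) := by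
  refine Set.InvOn.bijOn (f' := fun q => (q.1 ∘ merge hxy, pullbackOrientation hxy G q.2))
    ⟨?_, ?_⟩ ?_ ?_
  · rintro ⟨f, σ⟩ ⟨⟨-, hσ, -⟩, hf, hxy', hyx⟩
    simp only [comp_val_comp_merge hxy hf, pullbackOrientation_map_merge hxy hσ hxy' hyx]
  · rintro ⟨g, τ⟩ ⟨-, hτ, -⟩
    simp only [comp_merge_comp_val, map_merge_pullbackOrientation hxy hτ]
  · rintro ⟨f, σ⟩ ⟨⟨hf, hσ, hw⟩, hfxy, hxy', hyx⟩
    exact ⟨comp_val_mem_extensions B c m hf, hσ.map_merge hxy hxy' hyx, hw.map_merge hxy hfxy⟩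
  · rintro ⟨g, τ⟩ ⟨hg, hτ, hw⟩
    exact ⟨⟨comp_merge_mem_extensions hxy B c m hy hg, hτ.pullback hxy, hw.pullback hxy⟩,
      congrArg g (merge_left hxy), hτ.not_transGen_pullback hxy⟩

lemma ncard_compl_preimage_val_add_one [Finite W] (hy : y ∉ B) :
    (Subtype.val ⁻¹' B : Set {v // v ≠ y})ᶜ.ncard + 1 = Bᶜ.ncard := by
  have : Subtype.val '' (Subtype.val ⁻¹' B : Set {v // v ≠ y})ᶜ = Bᶜ \ {y} := by
    ext v
    constructor
    · rintro ⟨a, ha, rfl⟩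
      exact ⟨ha, a.2⟩
    · rintro ⟨hv, hvy⟩
      exact ⟨⟨v, hvy⟩, hv, rfl⟩
  rw [← Set.ncard_image_of_injective _ Subtype.val_injective, this,
    Set.ncard_sdiff_singleton_add_one hy]

lemma ncard_edgeSet_contractEdge_le [Finite W] :
    (contractEdge hxy G).edgeSet.ncard ≤ (G.deleteEdges {s(x, y)}).edgeSet.ncard := by
  have hsub : (contractEdge hxy G).edgeSet ⊆
      Sym2.map (merge hxy) '' (G.deleteEdges {s(x, y)}).edgeSet := by
    intro e he
    induction e with
    | _ a b =>
      obtain ⟨u, v, huv, rfl, rfl⟩ := exists_of_contractEdge_adj hxy he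
      exact ⟨s(u, v), huv, rfl⟩
  calc (contractEdge hxy G).edgeSet.ncard
      ≤ (Sym2.map (merge hxy) '' (G.deleteEdges {s(x, y)}).edgeSet).ncard :=
        Set.ncard_le_ncard hsub (Set.toFinite _)
    _ ≤ (G.deleteEdges {s(x, y)}).edgeSet.ncard := Set.ncard_image_le (Set.toFinite _)

end Contraction

section Reciprocity

open Polynomial

def IsReciprocityPolynomial (G : SimpleGraph W) (B : Set W) (c : W → ℕ) (k : ℕ) (Z : ℝ[X]) :
    Prop :=
  ∀ m, k ≤ m → Z.eval (m : ℝ) = (properExtensions G B c m).ncard ∧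
    Z.eval (-(m : ℝ)) = (-1) ^ Bᶜ.ncard * (compatiblePairs G B c m).ncard

variable [Finite W] {G : SimpleGraph W} {B : Set W} {c : W → ℕ} {k : ℕ}

lemma isReciprocityPolynomial_X_pow (hc : ∀ a ∈ B, 1 ≤ c a ∧ c a ≤ k)
    (hB : ∀ ⦃u v⦄, G.Adj u v → u ∈ B ∧ v ∈ B) (hinj : Set.InjOn c B) :
    IsReciprocityPolynomial G B c k (X ^ Bᶜ.ncard) := fun m hm => by
  have hcm : ∀ a ∈ B, 1 ≤ c a ∧ c a ≤ m := fun a ha => ⟨(hc a ha).1, (hc a ha).2.trans hm⟩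
  rw [eval_pow, eval_X, eval_pow, eval_X, properExtensions_eq_extensions hB hinj,
    ncard_compatiblePairs_eq_ncard_extensions hB hinj, ncard_extensions hcm, neg_pow]
  push_cast
  exact ⟨rfl, rfl⟩

lemma IsReciprocityPolynomial.sub_contractEdge {x y : W} {Zd Zc : ℝ[X]} (h : G.Adj x y)
    (hy : y ∉ B) (hZd : IsReciprocityPolynomial (G.deleteEdges {s(x, y)}) B c k Zd)
    (hZc : IsReciprocityPolynomial (contractEdge h.ne G) (Subtype.val ⁻¹' B) (c ∘ Subtype.val) k
      Zc) :
    IsReciprocityPolynomial G B c k (Zd - Zc) := fun m hm => by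
  obtain ⟨hd₁, hd₂⟩ := hZd m hm
  obtain ⟨hc₁, hc₂⟩ := hZc m hm
  have hN := ncard_properExtensions_deleteEdges B c m h
  rw [(bijOn_properExtensions_contractEdge h.ne B c m hy).ncard_eq] at hN
  have hQ := ncard_compatiblePairs_deleteEdges B c m h
  rw [(bijOn_compatiblePairs_contractEdge h.ne B c m hy).ncard_eq] at hQ
  rw [eval_sub, eval_sub, hd₁, hc₁, hd₂, hc₂, hN, hQ, ← ncard_compl_preimage_val_add_one B hy]
  push_cast
  constructor <;> ring

theorem exists_isReciprocityPolynomial (G : SimpleGraph W) (hc : ∀ a ∈ B, 1 ≤ c a ∧ c a ≤ k)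
    (hinj : Set.InjOn c B) : ∃ Z, IsReciprocityPolynomial G B c k Z := by
  induction hn : G.edgeSet.ncard using Nat.strong_induction_on generalizing W with
  | _ n ih =>
  by_cases hB : ∀ ⦃u v⦄, G.Adj u v → u ∈ B ∧ v ∈ B
  · exact ⟨_, isReciprocityPolynomial_X_pow hc hB hinj⟩
  obtain ⟨x, y, h, hy⟩ : ∃ x y, G.Adj x y ∧ y ∉ B := by
    push Not at hB
    obtain ⟨u, v, huv, hv⟩ := hB
    by_cases hu : u ∈ B
    exacts [⟨u, v, huv, hv hu⟩, ⟨v, u, huv.symm, hu⟩]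
  have hdel := ncard_edgeSet_deleteEdges_lt h
  obtain ⟨Zd, hZd⟩ := ih _ (hn ▸ hdel) (G.deleteEdges {s(x, y)}) hc hinj rfl
  obtain ⟨Zc, hZc⟩ := ih _ (hn ▸ (ncard_edgeSet_contractEdge_le h.ne).trans_lt hdel)
    (contractEdge h.ne G) (B := Subtype.val ⁻¹' B) (c := c ∘ Subtype.val) (fun a ha => hc a ha)
    (hinj.comp Subtype.val_injective.injOn fun _ ha => ha) rfl
  exact ⟨Zd - Zc, hZd.sub_contractEdge h hy hZc⟩

end Reciprocity

end ChromaticReciprocity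

theorem stmt18_general (V : Type*) [Fintype V] (G : SimpleGraph V) (A : Set V)
    (k : ℕ) (c : V → ℕ) (hc : ∀ a ∈ A, 1 ≤ c a ∧ c a ≤ k)
    (hinj : Set.InjOn c A)
    (χ : Polynomial ℝ)
    (hχ : ∀ m : ℕ, k ≤ m →
      χ.eval (m : ℝ) =
        Nat.card {cc : V → ℕ | (∀ v, 1 ≤ cc v ∧ cc v ≤ m) ∧ (∀ a ∈ A, cc a = c a) ∧
          ∀ u v : V, G.Adj u v → cc u ≠ cc v})
    (m : ℕ) (hm : k ≤ m) :
    |χ.eval (-(m : ℝ))| =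
      Nat.card {p : (V → ℕ) × (V → V → Prop) |
        (∀ v, 1 ≤ p.1 v ∧ p.1 v ≤ m) ∧ (∀ a ∈ A, p.1 a = c a) ∧
        (∀ u v : V, p.2 u v → G.Adj u v) ∧
        (∀ u v : V, G.Adj u v → (p.2 u v ↔ ¬ p.2 v u)) ∧
        (∀ v : V, ¬ Relation.TransGen p.2 v v) ∧
        (∀ u v : V, G.Adj u v → p.1 u < p.1 v → p.2 u v)} := by
  obtain ⟨Z, hZ⟩ := ChromaticReciprocity.exists_isReciprocityPolynomial G hc hinj
  have hχZ : χ = Z := by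
    refine Polynomial.eq_of_infinite_eval_eq χ Z <|
      Set.infinite_of_injective_forall_mem (f := fun n : ℕ => ((n + k : ℕ) : ℝ))
        (fun a b hab => by simpa using hab) fun n => ?_
    rw [Set.mem_ofPred_eq, hχ _ le_add_self, (hZ _ le_add_self).1,
      ChromaticReciprocity.natCard_properExtensions]
  rw [hχZ, (hZ m hm).2, ChromaticReciprocity.natCard_compatiblePairs, abs_mul, abs_pow, abs_neg,
    abs_one, one_pow, one_mul, Nat.abs_cast]

/-- if the partial coloring `c` is injective on `A`, then for `m ≥ k`,
`|χ_{G,c}(-m)|` counts pairs `(ĉ, σ)` of an (arbitrary) extension of `c` of size `m`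
and an acyclic orientation `σ` of `G` weakly compatible with `ĉ`. -/
theorem stmt18 (V : Type*) [Fintype V] (G : SimpleGraph V) (A : Set V)
    (k : ℕ) (hk : 1 ≤ k) (c : V → ℕ) (hc : ∀ a ∈ A, 1 ≤ c a ∧ c a ≤ k)
    (hinj : Set.InjOn c A)
    (χ : Polynomial ℝ)
    (hχ : ∀ m : ℕ, k ≤ m →
      χ.eval (m : ℝ) =
        Nat.card {cc : V → ℕ | (∀ v, 1 ≤ cc v ∧ cc v ≤ m) ∧ (∀ a ∈ A, cc a = c a) ∧
          ∀ u v : V, G.Adj u v → cc u ≠ cc v})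
    (m : ℕ) (hm : k ≤ m) :
    |χ.eval (-(m : ℝ))| =
      Nat.card {p : (V → ℕ) × (V → V → Prop) |
        (∀ v, 1 ≤ p.1 v ∧ p.1 v ≤ m) ∧ (∀ a ∈ A, p.1 a = c a) ∧
        (∀ u v : V, p.2 u v → G.Adj u v) ∧
        (∀ u v : V, G.Adj u v → (p.2 u v ↔ ¬ p.2 v u)) ∧
        (∀ v : V, ¬ Relation.TransGen p.2 v v) ∧
        (∀ u v : V, G.Adj u v → p.1 u < p.1 v → p.2 u v)} :=
  stmt18_general V G A k c hc hinj χ hχ m hm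
end

section
/- |χ_{G,c}(−1)| equals the number of acyclic orientations σ of G such that there is no directed path of σ from a to b for any distinct a, b ∈ A with c(a) ≥ c(b). -/
/-!
Deletion–contraction on an edge `uv`. If both ends are precoloured, equal colours leave neither a
proper extension nor an admissible orientation, while for `c u < c v` the edge rules out no
extension and has to be directed `u → v`, so it may be deleted. Otherwise, say `v ∉ A`: the
extensions of `G - uv` are those of `G` together with those having `f u = f v`, which are the
extensions of `G / uv`, so `χ_G = χ_{G-uv} - χ_{G/uv}`. Dually, every admissible orientation of
`G - uv` extends to `G` by directing `uv` in at least one way, and in both ways exactly when it is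
the pullback of an admissible orientation of `G / uv`; so `#O(G) = #O(G - uv) + #O(G / uv)`,
which is the recurrence at `-1`, since `G / uv` has one uncoloured vertex fewer. A graph without
edges has `χ = X ^ |V \ A|` and a single orientation.
-/

open Relation Set Filter Polynomial

namespace Relation

variable {α : Type*} {r : α → α → Prop} {u v a b : α}

def addArc (r : α → α → Prop) (u v : α) : α → α → Prop := fun x y => r x y ∨ (x = u ∧ y = v)

theorem transGen_of_reflTransGen_of_ne (h : ReflTransGen r a b) (hab : a ≠ b) : TransGen r a b :=
  (reflTransGen_iff_eq_or_transGen.mp h).resolve_left hab.symm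

theorem transGen_addArc_iff :
    TransGen (addArc r u v) a b ↔ TransGen r a b ∨ (ReflTransGen r a u ∧ ReflTransGen r v b) := by
  constructor
  · intro h
    induction h with
    | single h =>
      rcases h with h | ⟨rfl, rfl⟩
      · exact .inl (.single h)
      · exact .inr ⟨.refl, .refl⟩
    | tail _ h ih =>
      rcases h with h | ⟨rfl, rfl⟩
      · exact ih.imp (·.tail h) fun ⟨hau, hvb⟩ => ⟨hau, hvb.tail h⟩
      · exact .inr ⟨ih.elim (·.to_reflTransGen) (·.1), .refl⟩
  · have hle : r ≤ addArc r u v := fun _ _ => .inl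
    rintro (h | ⟨hau, hvb⟩)
    · exact TransGen.mono hle _ _ h
    · exact TransGen.trans_right (ReflTransGen.mono hle _ _ hau)
        (.head' (.inr ⟨rfl, rfl⟩) (ReflTransGen.mono hle _ _ hvb))

theorem addArc_injOn : InjOn (addArc · u v) {r : α → α → Prop | ¬ r u v} := by
  intro r₁ h₁ r₂ h₂ h
  funext x y
  by_cases hxy : x = u ∧ y = v
  · obtain ⟨rfl, rfl⟩ := hxy
    exact propext ⟨fun h => absurd h h₁, fun h => absurd h h₂⟩
  · have := congrFun₂ h x y
    simp only [addArc, eq_iff_iff, or_iff_left hxy] at this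
    exact propext this

end Relation

namespace Polynomial

theorem eq_of_eventually_eval_natCast_eq {R : Type*} [CommRing R] [IsDomain R] [CharZero R]
    {p q : R[X]} (h : ∀ᶠ n : ℕ in atTop, p.eval (n : R) = q.eval (n : R)) : p = q := by
  refine eq_of_infinite_eval_eq p q <|
    ((Nat.frequently_atTop_iff_infinite.mp h.frequently).image Nat.cast_injective.injOn).mono ?_
  rintro _ ⟨n, hn, rfl⟩
  exact hn

end Polynomial

namespace SimpleGraph

variable {V W : Type*}

structure IsProperExtension (G : SimpleGraph V) (A : Set V) (c : V → ℕ) (m : ℕ) (f : V → ℕ) :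
    Prop where
  bounds : ∀ v, 1 ≤ f v ∧ f v ≤ m
  eq_on : ∀ a ∈ A, f a = c a
  proper : ∀ u v, G.Adj u v → f u ≠ f v

/-- `σ u v` means that the edge `uv` is directed from `u` to `v`. -/
structure IsCompatibleOrientation (G : SimpleGraph V) (A : Set V) (c : V → ℕ)
    (σ : V → V → Prop) : Prop where
  adj : ∀ u v, σ u v → G.Adj u v
  orient : ∀ u v, G.Adj u v → (σ u v ↔ ¬ σ v u)
  acyclic : ∀ v, ¬ TransGen σ v v
  compatible : ∀ a ∈ A, ∀ b ∈ A, a ≠ b → c b ≤ c a → ¬ TransGen σ a b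

theorem isProperExtension_iff {G : SimpleGraph V} {A : Set V} {c : V → ℕ} {m : ℕ} {f : V → ℕ} :
    G.IsProperExtension A c m f ↔
      (∀ v, 1 ≤ f v ∧ f v ≤ m) ∧ (∀ a ∈ A, f a = c a) ∧ ∀ u v, G.Adj u v → f u ≠ f v :=
  ⟨fun h => ⟨h.1, h.2, h.3⟩, fun ⟨h₁, h₂, h₃⟩ => ⟨h₁, h₂, h₃⟩⟩

theorem isCompatibleOrientation_iff {G : SimpleGraph V} {A : Set V} {c : V → ℕ}
    {σ : V → V → Prop} : G.IsCompatibleOrientation A c σ ↔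
      (∀ u v, σ u v → G.Adj u v) ∧ (∀ u v, G.Adj u v → (σ u v ↔ ¬ σ v u)) ∧
        (∀ v, ¬ TransGen σ v v) ∧ ∀ a ∈ A, ∀ b ∈ A, a ≠ b → c b ≤ c a → ¬ TransGen σ a b :=
  ⟨fun h => ⟨h.1, h.2, h.3, h.4⟩, fun ⟨h₁, h₂, h₃, h₄⟩ => ⟨h₁, h₂, h₃, h₄⟩⟩

def SatisfiesReciprocity (G : SimpleGraph V) (A : Set V) (c : V → ℕ) : Prop :=
  ∃ χ : ℝ[X], (∀ᶠ m : ℕ in atTop, χ.eval (m : ℝ) = {f | G.IsProperExtension A c m f}.ncard) ∧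
    χ.eval (-1) = (-1) ^ Aᶜ.ncard * {σ | G.IsCompatibleOrientation A c σ}.ncard

section Coloring

variable {G : SimpleGraph V} {A : Set V} {c : V → ℕ} {m : ℕ} {f : V → ℕ} {u v : V}

theorem finite_setOf_isProperExtension [Finite V] (G : SimpleGraph V) (A : Set V) (c : V → ℕ)
    (m : ℕ) : {f | G.IsProperExtension A c m f}.Finite :=
  (Set.Finite.pi' fun _ => finite_Icc 1 m).subset fun _ hf x => hf.bounds x

theorem isProperExtension_iff_deleteEdges (huv : G.Adj u v) :
    G.IsProperExtension A c m f ↔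
      (G.deleteEdges {s(u, v)}).IsProperExtension A c m f ∧ f u ≠ f v := by
  refine ⟨fun hf => ⟨⟨hf.bounds, hf.eq_on, fun x y h => hf.proper x y (deleteEdges_le _ h)⟩,
    hf.proper u v huv⟩, fun ⟨hf, hne⟩ => ⟨hf.bounds, hf.eq_on, fun x y hxy => ?_⟩⟩
  by_cases he : s(x, y) = s(u, v)
  · rcases Sym2.eq_iff.mp he with ⟨rfl, rfl⟩ | ⟨rfl, rfl⟩
    exacts [hne, hne.symm]
  · exact hf.proper x y (deleteEdges_adj.mpr ⟨hxy, he⟩)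

theorem isProperExtension_iff_deleteEdges_of_ne (huv : G.Adj u v) (hu : u ∈ A) (hv : v ∈ A)
    (hne : c u ≠ c v) :
    G.IsProperExtension A c m f ↔ (G.deleteEdges {s(u, v)}).IsProperExtension A c m f :=
  (isProperExtension_iff_deleteEdges huv).trans <|
    and_iff_left_of_imp fun hf => by rwa [hf.eq_on u hu, hf.eq_on v hv]

theorem not_isProperExtension_of_eq (huv : G.Adj u v) (hu : u ∈ A) (hv : v ∈ A)
    (heq : c u = c v) : ¬ G.IsProperExtension A c m f := fun hf =>
  hf.proper u v huv (by rw [hf.eq_on u hu, hf.eq_on v hv, heq])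

theorem ncard_setOf_isProperExtension_bot [Finite V] (hc : ∀ a ∈ A, 1 ≤ c a ∧ c a ≤ m) :
    {f | (⊥ : SimpleGraph V).IsProperExtension A c m f}.ncard = m ^ Aᶜ.ncard := by
  classical
  have := Fintype.ofFinite V
  have hpi : {f | (⊥ : SimpleGraph V).IsProperExtension A c m f} =
      ↑(Fintype.piFinset fun x => if x ∈ A then {c x} else Finset.Icc 1 m) := by
    ext f
    simp only [Finset.mem_coe, Fintype.mem_piFinset]
    refine ⟨fun hf x => ?_, fun hf => ⟨fun x => ?_, fun a ha => ?_, fun _ _ h => h.elim⟩⟩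
    · split_ifs with hx
      · exact Finset.mem_singleton.mpr (hf.eq_on x hx)
      · exact Finset.mem_Icc.mpr (hf.bounds x)
    · have := hf x
      split_ifs at this with hx
      · rw [Finset.mem_singleton.mp this]; exact hc x hx
      · exact Finset.mem_Icc.mp this
    · simpa [ha] using hf a
  rw [hpi, ncard_coe_finset, Fintype.card_piFinset]
  simp only [apply_ite Finset.card, Finset.card_singleton, Nat.card_Icc, add_tsub_cancel_right]
  rw [Finset.prod_ite, Finset.prod_const_one, one_mul, Finset.prod_const, ← ncard_coe_finset]
  congr 2
  ext x
  simp

end Coloring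

namespace IsCompatibleOrientation

variable {G H : SimpleGraph V} {A : Set V} {c : V → ℕ} {σ : V → V → Prop} {u v a b : V}

theorem asymm (hσ : G.IsCompatibleOrientation A c σ) (h : σ u v) : ¬ σ v u :=
  (hσ.orient u v (hσ.adj u v h)).mp h

theorem total (hσ : G.IsCompatibleOrientation A c σ) (h : G.Adj u v) : σ u v ∨ σ v u :=
  or_iff_not_imp_left.mpr (hσ.orient v u h.symm).mpr

theorem lt_of_transGen (hσ : G.IsCompatibleOrientation A c σ) (ha : a ∈ A) (hb : b ∈ A)
    (h : TransGen σ a b) : c a < c b := by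
  rcases eq_or_ne a b with rfl | hab
  · exact absurd h (hσ.acyclic a)
  · exact lt_of_not_ge fun hba => hσ.compatible a ha b hb hab hba h

theorem le_of_reflTransGen (hσ : G.IsCompatibleOrientation A c σ) (ha : a ∈ A) (hb : b ∈ A)
    (h : ReflTransGen σ a b) : c a ≤ c b := by
  rcases reflTransGen_iff_eq_or_transGen.mp h with rfl | h
  exacts [le_rfl, (hσ.lt_of_transGen ha hb h).le]

theorem of_total (adj : ∀ u v, σ u v → G.Adj u v)
    (total : ∀ u v, G.Adj u v → σ u v ∨ σ v u) (acyclic : ∀ v, ¬ TransGen σ v v)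
    (lt : ∀ a ∈ A, ∀ b ∈ A, TransGen σ a b → c a < c b) : G.IsCompatibleOrientation A c σ where
  adj := adj
  orient u v h :=
    ⟨fun huv hvu => acyclic u (.tail (.single huv) hvu), (total u v h).resolve_right⟩
  acyclic := acyclic
  compatible a ha b hb _ hba h := (lt a ha b hb h).not_ge hba

theorem restrict (hσ : G.IsCompatibleOrientation A c σ) (hHG : H ≤ G) :
    H.IsCompatibleOrientation A c (fun x y => σ x y ∧ H.Adj x y) := by
  have hle : (fun x y => σ x y ∧ H.Adj x y) ≤ σ := fun _ _ => And.left
  exact of_total (fun _ _ h => h.2)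
    (fun x y h => (hσ.total (hHG h)).imp (⟨·, h⟩) (⟨·, h.symm⟩))
    (fun w h => hσ.acyclic w (TransGen.mono hle _ _ h))
    (fun a ha b hb h => hσ.lt_of_transGen ha hb (TransGen.mono hle _ _ h))

end IsCompatibleOrientation

theorem setOf_isCompatibleOrientation_bot {A : Set V} {c : V → ℕ} :
    {σ | (⊥ : SimpleGraph V).IsCompatibleOrientation A c σ} = {fun _ _ => False} := by
  ext σ
  refine ⟨fun h => funext₂ fun x y => eq_false fun hxy => h.adj x y hxy, ?_⟩
  rintro rfl
  have hnil : ∀ x y, ¬ TransGen (fun _ _ : V => False) x y := fun x y h =>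
    (TransGen.tail'_iff.mp h).choose_spec.2
  exact .of_total (fun _ _ => False.elim) (fun _ _ => False.elim) (fun w => hnil w w)
    fun a _ b _ h => (hnil a b h).elim

section Deletion

variable {G : SimpleGraph V} {A : Set V} {c : V → ℕ} {σ : V → V → Prop} {u v : V}

theorem not_adj_deleteEdges_self (G : SimpleGraph V) (u v : V) :
    ¬ (G.deleteEdges {s(u, v)}).Adj u v := fun h => (deleteEdges_adj.mp h).2 rfl

theorem not_isCompatibleOrientation_of_eq (huv : G.Adj u v) (hu : u ∈ A) (hv : v ∈ A)
    (heq : c u = c v) : ¬ G.IsCompatibleOrientation A c σ := fun hσ =>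
  (hσ.total huv).elim (fun h => (hσ.lt_of_transGen hu hv (.single h)).ne heq)
    (fun h => (hσ.lt_of_transGen hv hu (.single h)).ne heq.symm)

theorem addArc_restrict_deleteEdges (hσ : G.IsCompatibleOrientation A c σ) (huv : σ u v) :
    addArc (fun x y => σ x y ∧ (G.deleteEdges {s(u, v)}).Adj x y) u v = σ := by
  funext x y
  refine propext ⟨?_, fun hxy => ?_⟩
  · rintro (h | ⟨rfl, rfl⟩)
    exacts [h.1, huv]
  · by_cases he : s(x, y) = s(u, v)
    · rcases Sym2.eq_iff.mp he with ⟨rfl, rfl⟩ | ⟨rfl, rfl⟩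
      · exact .inr ⟨rfl, rfl⟩
      · exact absurd huv (hσ.asymm hxy)
    · exact .inl ⟨hxy, deleteEdges_adj.mpr ⟨hσ.adj x y hxy, he⟩⟩

theorem isCompatibleOrientation_addArc_iff (huv : G.Adj u v)
    (hσ : (G.deleteEdges {s(u, v)}).IsCompatibleOrientation A c σ) :
    G.IsCompatibleOrientation A c (addArc σ u v) ↔ ¬ TransGen σ v u ∧
      ∀ a ∈ A, ∀ b ∈ A, ReflTransGen σ a u → ReflTransGen σ v b → c a < c b := by
  constructor
  · intro h
    refine ⟨fun hvu => h.acyclic v ((transGen_addArc_iff.mpr (.inl hvu)).tail (.inr ⟨rfl, rfl⟩)),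
      fun a ha b hb hau hvb => h.lt_of_transGen ha hb (transGen_addArc_iff.mpr (.inr ⟨hau, hvb⟩))⟩
  · rintro ⟨hvu, hlt⟩
    refine .of_total ?_ (fun x y hxy => ?_) (fun w hw => ?_) (fun a ha b hb hab => ?_)
    · rintro x y (h | ⟨rfl, rfl⟩)
      exacts [deleteEdges_le _ (hσ.adj x y h), huv]
    · by_cases he : s(x, y) = s(u, v)
      · rcases Sym2.eq_iff.mp he with ⟨rfl, rfl⟩ | ⟨rfl, rfl⟩
        exacts [.inl (.inr ⟨rfl, rfl⟩), .inr (.inr ⟨rfl, rfl⟩)]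
      · exact (hσ.total (deleteEdges_adj.mpr ⟨hxy, he⟩)).imp .inl .inl
    · rcases transGen_addArc_iff.mp hw with hw | ⟨hwu, hvw⟩
      exacts [hσ.acyclic w hw, hvu (transGen_of_reflTransGen_of_ne (hvw.trans hwu) huv.ne.symm)]
    · rcases transGen_addArc_iff.mp hab with hab | ⟨hau, hvb⟩
      exacts [hσ.lt_of_transGen ha hb hab, hlt a ha b hb hau hvb]

theorem image_addArc :
    (addArc · u v) '' {σ | (G.deleteEdges {s(u, v)}).IsCompatibleOrientation A c σ ∧
      G.IsCompatibleOrientation A c (addArc σ u v)} =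
      {σ | G.IsCompatibleOrientation A c σ ∧ σ u v} := by
  ext σ
  constructor
  · rintro ⟨σ, ⟨-, h⟩, rfl⟩
    exact ⟨h, .inr ⟨rfl, rfl⟩⟩
  · rintro ⟨hσ, h⟩
    refine ⟨_, ⟨hσ.restrict (deleteEdges_le _), ?_⟩, addArc_restrict_deleteEdges hσ h⟩
    rwa [addArc_restrict_deleteEdges hσ h]

theorem ncard_setOf_isCompatibleOrientation_and (u v : V) :
    {σ | G.IsCompatibleOrientation A c σ ∧ σ u v}.ncard =
      {σ | (G.deleteEdges {s(u, v)}).IsCompatibleOrientation A c σ ∧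
        G.IsCompatibleOrientation A c (addArc σ u v)}.ncard := by
  rw [← image_addArc]
  refine (addArc_injOn.mono ?_).ncard_image
  exact fun σ hσ h => not_adj_deleteEdges_self G u v (hσ.1.adj u v h)

theorem ncard_setOf_isCompatibleOrientation [Finite V] (huv : G.Adj u v) :
    {σ | G.IsCompatibleOrientation A c σ}.ncard =
      {σ | (G.deleteEdges {s(u, v)}).IsCompatibleOrientation A c σ ∧
        G.IsCompatibleOrientation A c (addArc σ u v)}.ncard +
      {σ | (G.deleteEdges {s(u, v)}).IsCompatibleOrientation A c σ ∧
        G.IsCompatibleOrientation A c (addArc σ v u)}.ncard := by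
  have hsplit : {σ | G.IsCompatibleOrientation A c σ} =
      {σ | G.IsCompatibleOrientation A c σ ∧ σ u v} ∪
        {σ | G.IsCompatibleOrientation A c σ ∧ σ v u} := by
    ext σ
    exact ⟨fun h => (h.total huv).imp (⟨h, ·⟩) (⟨h, ·⟩), by rintro (⟨h, -⟩ | ⟨h, -⟩) <;> exact h⟩
  have hdisj : Disjoint {σ | G.IsCompatibleOrientation A c σ ∧ σ u v}
      {σ | G.IsCompatibleOrientation A c σ ∧ σ v u} :=
    Set.disjoint_left.mpr fun _ h₁ h₂ => h₁.1.asymm h₁.2 h₂.2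
  rw [hsplit, ncard_union_eq hdisj, ncard_setOf_isCompatibleOrientation_and u v,
    ncard_setOf_isCompatibleOrientation_and v u, Sym2.eq_swap (a := v)]

theorem isCompatibleOrientation_addArc_of_lt (huv : G.Adj u v) (hu : u ∈ A) (hv : v ∈ A)
    (hlt : c u < c v) (hσ : (G.deleteEdges {s(u, v)}).IsCompatibleOrientation A c σ) :
    G.IsCompatibleOrientation A c (addArc σ u v) :=
  (isCompatibleOrientation_addArc_iff huv hσ).mpr
    ⟨fun h => (hσ.lt_of_transGen hv hu h).not_gt hlt, fun _ ha _ hb hau hvb =>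
      (hσ.le_of_reflTransGen ha hu hau).trans_lt (hlt.trans_le (hσ.le_of_reflTransGen hv hb hvb))⟩

theorem ncard_setOf_isCompatibleOrientation_of_lt [Finite V] (huv : G.Adj u v) (hu : u ∈ A)
    (hv : v ∈ A) (hlt : c u < c v) :
    {σ | G.IsCompatibleOrientation A c σ}.ncard =
      {σ | (G.deleteEdges {s(u, v)}).IsCompatibleOrientation A c σ}.ncard := by
  have hvu : ∀ σ, ¬ G.IsCompatibleOrientation A c (addArc σ v u) := fun σ h =>
    (h.lt_of_transGen hv hu (.single (.inr ⟨rfl, rfl⟩))).not_gt hlt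
  rw [ncard_setOf_isCompatibleOrientation huv]
  simp only [hvu, and_false, ofPred_false, ncard_empty, add_zero]
  congr 1
  ext σ
  exact ⟨And.left, fun h => ⟨h, isCompatibleOrientation_addArc_of_lt huv hu hv hlt h⟩⟩

theorem isCompatibleOrientation_addArc_or (huv : G.Adj u v) (hvA : v ∉ A)
    (hσ : (G.deleteEdges {s(u, v)}).IsCompatibleOrientation A c σ) :
    G.IsCompatibleOrientation A c (addArc σ u v) ∨
      G.IsCompatibleOrientation A c (addArc σ v u) := by
  have hσ' : (G.deleteEdges {s(v, u)}).IsCompatibleOrientation A c σ := by rwa [Sym2.eq_swap]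
  rw [isCompatibleOrientation_addArc_iff huv hσ, isCompatibleOrientation_addArc_iff huv.symm hσ']
  by_contra h
  simp only [not_or, not_and_or, not_not, not_forall, not_lt, exists_prop] at h
  obtain ⟨hvu | ⟨a, ha, b, hb, hau, hvb, hba⟩, huv' | ⟨a', ha', b', hb', ha'v, hub', hb'a'⟩⟩ := h
  · exact hσ.acyclic v (hvu.trans huv')
  · exact (hσ.lt_of_transGen ha' hb' (.trans_right ha'v (hvu.trans_left hub'))).not_ge hb'a'
  · exact (hσ.lt_of_transGen ha hb (.trans_right hau (huv'.trans_left hvb))).not_ge hba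
  · have ha'v' := transGen_of_reflTransGen_of_ne ha'v (ne_of_mem_of_not_mem ha' hvA)
    have := hσ.lt_of_transGen ha' hb (ha'v'.trans_left hvb)
    have := hσ.le_of_reflTransGen ha hb' (hau.trans hub')
    -- `c b' ≤ c a' < c b ≤ c a ≤ c b'`
    omega

end Deletion

section Pullback

variable {H : SimpleGraph V} {f : V → W} {ς : W → W → Prop} {x y : V}

def pullback (H : SimpleGraph V) (f : V → W) (ς : W → W → Prop) : V → V → Prop :=
  fun x y => H.Adj x y ∧ ς (f x) (f y)

theorem transGen_pullback (h : TransGen (H.pullback f ς) x y) : TransGen ς (f x) (f y) :=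
  TransGen.lift f (fun _ _ h => h.2) _ _ h

theorem reflTransGen_pullback (h : ReflTransGen (H.pullback f ς) x y) :
    ReflTransGen ς (f x) (f y) :=
  ReflTransGen.lift f (fun _ _ h => h.2) _ _ h

theorem pullback_injOn (H : SimpleGraph V) (f : V → W) :
    InjOn (H.pullback f) {ς | ∀ x y, ς x y → (H.map f).Adj x y} := by
  have key : ∀ ς₁ ς₂ : W → W → Prop, (∀ x y, ς₁ x y → (H.map f).Adj x y) →
      H.pullback f ς₁ = H.pullback f ς₂ → ∀ x y, ς₁ x y → ς₂ x y := by
    intro ς₁ ς₂ h₁ he x y hxy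
    obtain ⟨-, x', y', hadj, rfl, rfl⟩ := h₁ x y hxy
    have : H.pullback f ς₂ x' y' := he ▸ ⟨hadj, hxy⟩
    exact this.2
  intro ς₁ h₁ ς₂ h₂ he
  funext x y
  exact propext ⟨key ς₁ ς₂ h₁ he x y, key ς₂ ς₁ h₂ he.symm x y⟩

theorem pullback_map_eq {A : Set V} {c : V → ℕ} {σ : V → V → Prop}
    (hσ : H.IsCompatibleOrientation A c σ) (hacyc : ∀ w, ¬ TransGen (Relation.Map σ f f) w w) :
    H.pullback f (Relation.Map σ f f) = σ := by
  funext x y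
  refine propext ⟨fun ⟨hxy, hmap⟩ => (hσ.total hxy).resolve_right fun hyx => ?_,
    fun hxy => ⟨hσ.adj x y hxy, x, y, hxy, rfl, rfl⟩⟩
  exact hacyc _ (.tail (.single hmap) ⟨y, x, hyx, rfl, rfl⟩)

end Pullback

section Contraction

variable {u v : V}

open Classical in
/-- The contraction of an edge `uv` of `G` is `(G.deleteEdges {s(u, v)}).map (mergeVertex h)`. -/
noncomputable def mergeVertex (h : u ≠ v) (x : V) : {x : V // x ≠ v} :=
  if hx : x = v then ⟨u, h⟩ else ⟨x, hx⟩

variable (h : u ≠ v)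

theorem mergeVertex_self : mergeVertex h v = ⟨u, h⟩ := dif_pos rfl

theorem mergeVertex_of_ne {x : V} (hx : x ≠ v) : mergeVertex h x = ⟨x, hx⟩ := dif_neg hx

theorem mergeVertex_val (x : {x : V // x ≠ v}) : mergeVertex h x = x := mergeVertex_of_ne h x.2

theorem mergeVertex_left : mergeVertex h u = mergeVertex h v := by
  rw [mergeVertex_self, mergeVertex_of_ne h h]

theorem mergeVertex_surjective : Function.Surjective (mergeVertex h) :=
  fun x => ⟨x, mergeVertex_val h x⟩

theorem mergeVertex_eq_iff {x : V} {y : {x : V // x ≠ v}} :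
    mergeVertex h x = y ↔ x = y ∨ (x = v ∧ (y : V) = u) := by
  by_cases hx : x = v
  · subst hx
    rw [mergeVertex_self, Subtype.ext_iff]
    exact ⟨fun he => .inr ⟨rfl, he.symm⟩,
      fun he => he.elim (fun he => absurd he.symm y.2) (·.2.symm)⟩
  · rw [mergeVertex_of_ne h hx, Subtype.ext_iff]
    exact ⟨.inl, fun he => he.resolve_right fun he => hx he.1⟩

theorem apply_mergeVertex_of_eq {f : V → ℕ} (hf : f u = f v) (x : V) :
    f (mergeVertex h x) = f x := by
  by_cases hx : x = v
  · rw [hx, mergeVertex_self, hf]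
  · rw [mergeVertex_of_ne h hx]

theorem mergeVertex_ne_of_adj {D : SimpleGraph V} (hD : ¬ D.Adj u v) {x y : V}
    (hxy : D.Adj x y) : mergeVertex h x ≠ mergeVertex h y := by
  intro he
  by_cases hx : x = v <;> by_cases hy : y = v
  · exact hxy.ne (hx.trans hy.symm)
  · rw [hx, mergeVertex_self, mergeVertex_of_ne h hy, Subtype.mk.injEq] at he
    exact hD (he ▸ hx ▸ hxy.symm)
  · rw [hy, mergeVertex_self, mergeVertex_of_ne h hx, Subtype.mk.injEq] at he
    exact hD (he ▸ hy ▸ hxy)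
  · rw [mergeVertex_of_ne h hx, mergeVertex_of_ne h hy, Subtype.mk.injEq] at he
    exact hxy.ne he

variable {A : Set V} {c : V → ℕ} {m : ℕ}

theorem mergeVertex_of_mem (hvA : v ∉ A) {a : V} (ha : a ∈ A) :
    mergeVertex h a = ⟨a, ne_of_mem_of_not_mem ha hvA⟩ :=
  mergeVertex_of_ne h _

theorem image_comp_mergeVertex {D : SimpleGraph V} (hD : ¬ D.Adj u v) (hvA : v ∉ A) :
    (· ∘ mergeVertex h) '' {g | (D.map (mergeVertex h)).IsProperExtension
      (Subtype.val ⁻¹' A) (c ∘ Subtype.val) m g} =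
      {f | D.IsProperExtension A c m f ∧ f u = f v} := by
  ext f
  constructor
  · rintro ⟨g, hg, rfl⟩
    refine ⟨⟨fun x => hg.bounds _, fun a ha => ?_, fun x y hxy => hg.proper _ _
      ⟨mergeVertex_ne_of_adj h hD hxy, x, y, hxy, rfl, rfl⟩⟩, congrArg g (mergeVertex_left h)⟩
    simp only [Function.comp_apply, mergeVertex_of_mem h hvA ha]
    exact hg.eq_on _ ha
  · rintro ⟨hf, hfuv⟩
    refine ⟨f ∘ Subtype.val, ⟨fun x => hf.bounds x, fun a ha => hf.eq_on a ha, ?_⟩,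
      funext (apply_mergeVertex_of_eq h hfuv)⟩
    rintro _ _ ⟨-, x, y, hxy, rfl, rfl⟩
    simp only [Function.comp_apply, apply_mergeVertex_of_eq h hfuv]
    exact hf.proper x y hxy

theorem ncard_setOf_isProperExtension_deleteEdges [Finite V] {G : SimpleGraph V}
    (huv : G.Adj u v) (hvA : v ∉ A) (m : ℕ) :
    {f | (G.deleteEdges {s(u, v)}).IsProperExtension A c m f}.ncard =
      {f | G.IsProperExtension A c m f}.ncard +
      {g | ((G.deleteEdges {s(u, v)}).map (mergeVertex huv.ne)).IsProperExtension
        (Subtype.val ⁻¹' A) (c ∘ Subtype.val) m g}.ncard := by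
  rw [← ncard_inter_add_ncard_sdiff_eq_ncard _ {f | f u = f v}
    (finite_setOf_isProperExtension _ A c m), add_comm,
    ← ((mergeVertex_surjective huv.ne).injective_comp_right.injOn).ncard_image,
    image_comp_mergeVertex huv.ne (not_adj_deleteEdges_self G u v) hvA]
  congr 2
  ext f
  exact (isProperExtension_iff_deleteEdges huv).symm

variable {σ : V → V → Prop} {ς : {x : V // x ≠ v} → {x : V // x ≠ v} → Prop}

theorem isCompatibleOrientation_pullback {D : SimpleGraph V} (hD : ¬ D.Adj u v) (hvA : v ∉ A)
    (hς : (D.map (mergeVertex h)).IsCompatibleOrientation (Subtype.val ⁻¹' A)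
      (c ∘ Subtype.val) ς) :
    D.IsCompatibleOrientation A c (D.pullback (mergeVertex h) ς) := by
  refine .of_total (fun _ _ h => h.1) (fun x y hxy => ?_)
    (fun w hw => hς.acyclic _ (transGen_pullback hw)) (fun a ha b hb hab => ?_)
  · exact (hς.total ⟨mergeVertex_ne_of_adj h hD hxy, x, y, hxy, rfl, rfl⟩).imp
      (⟨hxy, ·⟩) (⟨hxy.symm, ·⟩)
  · have := transGen_pullback hab
    rw [mergeVertex_of_mem h hvA ha, mergeVertex_of_mem h hvA hb] at this
    exact hς.lt_of_transGen ha hb this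

theorem isCompatibleOrientation_addArc_pullback {G D : SimpleGraph V}
    {H : SimpleGraph {x : V // x ≠ v}} {x y : V} (hxy : G.Adj x y)
    (hmerge : mergeVertex h x = mergeVertex h y) (hvA : v ∉ A)
    (hς : H.IsCompatibleOrientation (Subtype.val ⁻¹' A) (c ∘ Subtype.val) ς)
    (hσ : (G.deleteEdges {s(x, y)}).IsCompatibleOrientation A c (D.pullback (mergeVertex h) ς)) :
    G.IsCompatibleOrientation A c (addArc (D.pullback (mergeVertex h) ς) x y) := by
  have hyx : ¬ TransGen (D.pullback (mergeVertex h) ς) y x := fun hyx => by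
    have := transGen_pullback hyx
    rw [hmerge] at this
    exact hς.acyclic _ this
  refine (isCompatibleOrientation_addArc_iff hxy hσ).mpr ⟨hyx, fun a ha b hb hax hyb => ?_⟩
  rcases eq_or_ne a b with rfl | hab
  · exact absurd (transGen_of_reflTransGen_of_ne (hyb.trans hax) hxy.ne.symm) hyx
  have hyb' := reflTransGen_pullback hyb
  rw [← hmerge] at hyb'
  have hab' := (reflTransGen_pullback hax).trans hyb'
  rw [mergeVertex_of_mem h hvA ha, mergeVertex_of_mem h hvA hb] at hab'
  exact hς.lt_of_transGen ha hb (transGen_of_reflTransGen_of_ne hab' (by simpa using hab))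

theorem map_mergeVertex_cases (hirr : ¬ σ v v) {x y : {x : V // x ≠ v}}
    (hxy : Relation.Map σ (mergeVertex h) (mergeVertex h) x y) :
    σ x y ∨ ((x : V) = u ∧ σ v y) ∨ ((y : V) = u ∧ σ x v) := by
  obtain ⟨x', y', hσ, hx, hy⟩ := hxy
  rcases (mergeVertex_eq_iff h).mp hx with rfl | ⟨rfl, hxu⟩ <;>
    rcases (mergeVertex_eq_iff h).mp hy with rfl | ⟨rfl, hyu⟩
  · exact .inl hσ
  · exact .inr (.inr ⟨hyu, hσ⟩)
  · exact .inr (.inl ⟨hxu, hσ⟩)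
  · exact absurd hσ hirr

theorem transGen_map_mergeVertex (hσ : ∀ w, ¬ TransGen σ w w) (huv : ¬ TransGen σ u v)
    (hvu : ¬ TransGen σ v u) {x y : {x : V // x ≠ v}}
    (hxy : TransGen (Relation.Map σ (mergeVertex h) (mergeVertex h)) x y) :
    TransGen (addArc σ u v) x y ∨ TransGen (addArc σ v u) x y := by
  have hirr : ¬ σ v v := fun h => hσ v (.single h)
  simp only [transGen_addArc_iff]
  -- a path of the contraction switches between `u` and `v` at most once
  suffices TransGen σ x y ∨ (ReflTransGen σ x u ∧ ReflTransGen σ v y) ∨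
      (ReflTransGen σ x v ∧ ReflTransGen σ u y) by tauto
  induction hxy with
  | single hs =>
    rcases map_mergeVertex_cases h hirr hs with hs | ⟨hxu, hs⟩ | ⟨hyu, hs⟩
    · exact .inl (.single hs)
    · exact .inr (.inl ⟨by rw [hxu], .single hs⟩)
    · exact .inr (.inr ⟨.single hs, by rw [hyu]⟩)
  | tail _ hs ih =>
    rcases map_mergeVertex_cases h hirr hs with hs | ⟨hbu, hs⟩ | ⟨hcu, hs⟩ <;>
      rcases ih with ih | ⟨ih₁, ih₂⟩ | ⟨ih₁, ih₂⟩
    · exact .inl (ih.tail hs)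
    · exact .inr (.inl ⟨ih₁, ih₂.tail hs⟩)
    · exact .inr (.inr ⟨ih₁, ih₂.tail hs⟩)
    · exact .inr (.inl ⟨hbu ▸ ih.to_reflTransGen, .single hs⟩)
    · exact absurd (transGen_of_reflTransGen_of_ne (hbu ▸ ih₂) h.symm) hvu
    · exact .inl (.tail' ih₁ hs)
    · exact .inr (.inr ⟨(ih.tail hs).to_reflTransGen, by rw [hcu]⟩)
    · exact absurd (.tail' ih₂ hs) (hσ v)
    · exact absurd (.tail' ih₂ hs) huv

theorem isCompatibleOrientation_map {G D : SimpleGraph V} (hσ : D.IsCompatibleOrientation A c σ)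
    (huv : G.IsCompatibleOrientation A c (addArc σ u v))
    (hvu : G.IsCompatibleOrientation A c (addArc σ v u)) :
    (D.map (mergeVertex h)).IsCompatibleOrientation (Subtype.val ⁻¹' A) (c ∘ Subtype.val)
      (Relation.Map σ (mergeVertex h) (mergeVertex h)) := by
  have hlift : ∀ {x y}, TransGen (Relation.Map σ (mergeVertex h) (mergeVertex h)) x y →
      TransGen (addArc σ u v) x y ∨ TransGen (addArc σ v u) x y :=
    transGen_map_mergeVertex h hσ.acyclic
      (fun h' => hvu.acyclic u ((transGen_addArc_iff.mpr (.inl h')).tail (.inr ⟨rfl, rfl⟩)))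
      (fun h' => huv.acyclic v ((transGen_addArc_iff.mpr (.inl h')).tail (.inr ⟨rfl, rfl⟩)))
  have hacyc : ∀ w, ¬ TransGen (Relation.Map σ (mergeVertex h) (mergeVertex h)) w w :=
    fun w hw => (hlift hw).elim (huv.acyclic w) (hvu.acyclic w)
  refine .of_total ?_ ?_ hacyc fun a ha b hb hab =>
    (hlift hab).elim (huv.lt_of_transGen ha hb) (hvu.lt_of_transGen ha hb)
  · rintro _ _ ⟨x, y, hxy, rfl, rfl⟩
    exact ⟨fun he => hacyc _ (.single ⟨x, y, hxy, rfl, he.symm⟩), x, y, hσ.adj x y hxy, rfl, rfl⟩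
  · rintro _ _ ⟨-, x, y, hxy, rfl, rfl⟩
    exact (hσ.total hxy).imp (⟨x, y, ·, rfl, rfl⟩) (⟨y, x, ·, rfl, rfl⟩)

theorem image_pullback_mergeVertex {G : SimpleGraph V} (huv : G.Adj u v) (hvA : v ∉ A) :
    (G.deleteEdges {s(u, v)}).pullback (mergeVertex huv.ne) ''
        {ς | ((G.deleteEdges {s(u, v)}).map (mergeVertex huv.ne)).IsCompatibleOrientation
          (Subtype.val ⁻¹' A) (c ∘ Subtype.val) ς} =
      {σ | (G.deleteEdges {s(u, v)}).IsCompatibleOrientation A c σ ∧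
        G.IsCompatibleOrientation A c (addArc σ u v)} ∩
      {σ | (G.deleteEdges {s(u, v)}).IsCompatibleOrientation A c σ ∧
        G.IsCompatibleOrientation A c (addArc σ v u)} := by
  ext σ
  constructor
  · rintro ⟨ς, hς, rfl⟩
    have hD := isCompatibleOrientation_pullback huv.ne (not_adj_deleteEdges_self G u v) hvA hς
    have hD' : (G.deleteEdges {s(v, u)}).IsCompatibleOrientation A c
        ((G.deleteEdges {s(u, v)}).pullback (mergeVertex huv.ne) ς) := by
      rwa [Sym2.eq_swap]
    exact ⟨⟨hD, isCompatibleOrientation_addArc_pullback huv.ne huv (mergeVertex_left _) hvA hς hD⟩,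
      ⟨hD, isCompatibleOrientation_addArc_pullback huv.ne huv.symm (mergeVertex_left _).symm hvA
        hς hD'⟩⟩
  · rintro ⟨⟨hσ, huv'⟩, -, hvu'⟩
    have hς := isCompatibleOrientation_map huv.ne hσ huv' hvu'
    exact ⟨_, hς, pullback_map_eq hσ hς.acyclic⟩

theorem ncard_setOf_isCompatibleOrientation_of_not_mem [Finite V] {G : SimpleGraph V}
    (huv : G.Adj u v) (hvA : v ∉ A) :
    {σ | G.IsCompatibleOrientation A c σ}.ncard =
      {σ | (G.deleteEdges {s(u, v)}).IsCompatibleOrientation A c σ}.ncard +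
      {ς | ((G.deleteEdges {s(u, v)}).map (mergeVertex huv.ne)).IsCompatibleOrientation
        (Subtype.val ⁻¹' A) (c ∘ Subtype.val) ς}.ncard := by
  rw [ncard_setOf_isCompatibleOrientation huv, ← ncard_union_add_ncard_inter,
    ← image_pullback_mergeVertex huv hvA,
    ((pullback_injOn _ _).mono fun ς hς => hς.adj).ncard_image]
  congr 2
  ext σ
  exact ⟨fun h => h.elim And.left And.left,
    fun h => (isCompatibleOrientation_addArc_or huv hvA h).imp (⟨h, ·⟩) (⟨h, ·⟩)⟩

theorem ncard_compl_preimage_val_add_one [Finite V] (hvA : v ∉ A) :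
    (Subtype.val ⁻¹' A : Set {x : V // x ≠ v})ᶜ.ncard + 1 = Aᶜ.ncard := by
  have hrange : Aᶜ \ {v} ⊆ range (Subtype.val : {x : V // x ≠ v} → V) :=
    fun x hx => ⟨⟨x, hx.2⟩, rfl⟩
  rw [← ncard_sdiff_singleton_add_one (show v ∈ Aᶜ from hvA),
    ← ncard_preimage_of_injective_subset_range Subtype.val_injective hrange]
  congr 2
  ext x
  simp [x.2]

end Contraction

theorem ncard_edgeSet_deleteEdges_lt [Finite V] {G : SimpleGraph V} {u v : V} (huv : G.Adj u v) :
    (G.deleteEdges {s(u, v)}).edgeSet.ncard < G.edgeSet.ncard := by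
  rw [edgeSet_deleteEdges]
  exact ncard_sdiff_singleton_lt_of_mem huv

theorem ncard_edgeSet_map_le [Finite V] (f : V → W) (H : SimpleGraph V) :
    (H.map f).edgeSet.ncard ≤ H.edgeSet.ncard := by
  refine (ncard_le_ncard ?_ (H.edgeSet.toFinite.image (Sym2.map f))).trans
    (ncard_image_le H.edgeSet.toFinite)
  intro e he
  induction e using Sym2.ind with
  | _ x y =>
    obtain ⟨-, x', y', hadj, rfl, rfl⟩ := he
    exact ⟨s(x', y'), hadj, rfl⟩

namespace SatisfiesReciprocity

variable {G : SimpleGraph V} {A : Set V} {c : V → ℕ} {u v : V}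

theorem bot [Finite V] (hc : ∀ a ∈ A, 1 ≤ c a) : (⊥ : SimpleGraph V).SatisfiesReciprocity A c := by
  obtain ⟨M, hM⟩ := (finite_range c).bddAbove
  refine ⟨X ^ Aᶜ.ncard, ?_, ?_⟩
  · filter_upwards [eventually_ge_atTop M] with m hm
    rw [ncard_setOf_isProperExtension_bot fun a ha => ⟨hc a ha, (hM ⟨a, rfl⟩).trans hm⟩]
    simp
  · rw [setOf_isCompatibleOrientation_bot, ncard_singleton]
    simp

theorem of_eq (huv : G.Adj u v) (hu : u ∈ A) (hv : v ∈ A) (heq : c u = c v) :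
    G.SatisfiesReciprocity A c := by
  refine ⟨0, .of_forall fun m => ?_, ?_⟩ <;>
    simp [not_isProperExtension_of_eq huv hu hv heq,
      not_isCompatibleOrientation_of_eq huv hu hv heq]

theorem of_deleteEdges_of_lt [Finite V] (huv : G.Adj u v) (hu : u ∈ A) (hv : v ∈ A)
    (hlt : c u < c v) (hD : (G.deleteEdges {s(u, v)}).SatisfiesReciprocity A c) :
    G.SatisfiesReciprocity A c := by
  obtain ⟨χ, hcol, horient⟩ := hD
  refine ⟨χ, hcol.mono fun m hm => ?_, ?_⟩
  · simp only [isProperExtension_iff_deleteEdges_of_ne huv hu hv hlt.ne, hm]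
  · rw [horient, ncard_setOf_isCompatibleOrientation_of_lt huv hu hv hlt]

theorem of_deleteEdges_of_map [Finite V] (huv : G.Adj u v) (hvA : v ∉ A)
    (hD : (G.deleteEdges {s(u, v)}).SatisfiesReciprocity A c)
    (hC : ((G.deleteEdges {s(u, v)}).map (mergeVertex huv.ne)).SatisfiesReciprocity
      (Subtype.val ⁻¹' A) (c ∘ Subtype.val)) :
    G.SatisfiesReciprocity A c := by
  obtain ⟨χD, hcolD, horD⟩ := hD
  obtain ⟨χC, hcolC, horC⟩ := hC
  refine ⟨χD - χC, ?_, ?_⟩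
  · filter_upwards [hcolD, hcolC] with m hD hC
    rw [eval_sub, hD, hC, ncard_setOf_isProperExtension_deleteEdges huv hvA m]
    push_cast
    ring
  · rw [eval_sub, horD, horC, ncard_setOf_isCompatibleOrientation_of_not_mem huv hvA,
      ← ncard_compl_preimage_val_add_one hvA]
    push_cast
    ring

end SatisfiesReciprocity

theorem satisfiesReciprocity [Finite V] (G : SimpleGraph V) (A : Set V) (c : V → ℕ)
    (hc : ∀ a ∈ A, 1 ≤ c a) : G.SatisfiesReciprocity A c := by
  induction hn : G.edgeSet.ncard using Nat.strong_induction_on generalizing V with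
  | _ n ih =>
  by_cases hG : G = ⊥
  · subst hG
    exact .bot hc
  obtain ⟨u, v, huv⟩ : ∃ u v, G.Adj u v := by
    simpa [eq_bot_iff_forall_not_adj] using hG
  have hdel : ∀ {x y}, G.Adj x y → (G.deleteEdges {s(x, y)}).SatisfiesReciprocity A c :=
    fun hxy => ih _ (hn ▸ ncard_edgeSet_deleteEdges_lt hxy) _ A c hc rfl
  have hcontract : ∀ {x y}, G.Adj x y → y ∉ A → G.SatisfiesReciprocity A c := fun hxy hyA =>
    .of_deleteEdges_of_map hxy hyA (hdel hxy) <| ih _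
      (hn ▸ (ncard_edgeSet_map_le _ _).trans_lt (ncard_edgeSet_deleteEdges_lt hxy)) _ _ _
      (fun a ha => hc a ha) rfl
  by_cases hv : v ∈ A
  · by_cases hu : u ∈ A
    · rcases lt_trichotomy (c u) (c v) with hlt | heq | hgt
      · exact .of_deleteEdges_of_lt huv hu hv hlt (hdel huv)
      · exact .of_eq huv hu hv heq
      · exact .of_deleteEdges_of_lt huv.symm hv hu hgt (hdel huv.symm)
    · exact hcontract huv.symm hu
  · exact hcontract huv hv

end SimpleGraph

theorem stmt19_general (V : Type*) [Fintype V] (G : SimpleGraph V) (A : Set V)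
    (k : ℕ) (c : V → ℕ) (hc : ∀ a ∈ A, 1 ≤ c a ∧ c a ≤ k)
    (χ : Polynomial ℝ)
    (hχ : ∀ m : ℕ, k ≤ m →
      χ.eval (m : ℝ) =
        Nat.card {cc : V → ℕ | (∀ v, 1 ≤ cc v ∧ cc v ≤ m) ∧ (∀ a ∈ A, cc a = c a) ∧
          ∀ u v : V, G.Adj u v → cc u ≠ cc v}) :
    |χ.eval (-1 : ℝ)| =
      Nat.card {σ : V → V → Prop |
        (∀ u v : V, σ u v → G.Adj u v) ∧
        (∀ u v : V, G.Adj u v → (σ u v ↔ ¬ σ v u)) ∧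
        (∀ v : V, ¬ Relation.TransGen σ v v) ∧
        (∀ a ∈ A, ∀ b ∈ A, a ≠ b → c b ≤ c a → ¬ Relation.TransGen σ a b)} := by
  simp only [← SimpleGraph.isProperExtension_iff, ← SimpleGraph.isCompatibleOrientation_iff,
    Nat.card_coe_set_eq] at hχ ⊢
  obtain ⟨χ₀, hcol, horient⟩ := G.satisfiesReciprocity A c fun a ha => (hc a ha).1
  have hχ₀ : χ = χ₀ := Polynomial.eq_of_eventually_eval_natCast_eq <| by
    filter_upwards [eventually_ge_atTop k, hcol] with m hm h
    rw [hχ m hm, h]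
  rw [hχ₀, horient, abs_mul, abs_pow, abs_neg, abs_one, one_pow, one_mul, Nat.abs_cast]

/-- `|χ_{G,c}(-1)|` counts the acyclic orientations `σ` of `G` with no
directed path from `a` to `b` for distinct `a, b ∈ A` with `c(a) ≥ c(b)`. -/
theorem stmt19 (V : Type*) [Fintype V] (G : SimpleGraph V) (A : Set V)
    (k : ℕ) (hk : 1 ≤ k) (c : V → ℕ) (hc : ∀ a ∈ A, 1 ≤ c a ∧ c a ≤ k)
    (χ : Polynomial ℝ)
    (hχ : ∀ m : ℕ, k ≤ m →
      χ.eval (m : ℝ) =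
        Nat.card {cc : V → ℕ | (∀ v, 1 ≤ cc v ∧ cc v ≤ m) ∧ (∀ a ∈ A, cc a = c a) ∧
          ∀ u v : V, G.Adj u v → cc u ≠ cc v}) :
    |χ.eval (-1 : ℝ)| =
      Nat.card {σ : V → V → Prop |
        (∀ u v : V, σ u v → G.Adj u v) ∧
        (∀ u v : V, G.Adj u v → (σ u v ↔ ¬ σ v u)) ∧
        (∀ v : V, ¬ Relation.TransGen σ v v) ∧
        (∀ a ∈ A, ∀ b ∈ A, a ≠ b → c b ≤ c a → ¬ Relation.TransGen σ a b)} :=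
  stmt19_general V G A k c hc χ hχ
end
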